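/- arXiv:math/9709208 — 4 statements merged into one kernel-verified Lean document; each statement's English description precedes it below -/
import Mathlib

section
/- Let u = (u_j) and t = (t_j) be sequences of positive reals decreasing to zero. Suppose there exist a positive integer n and a constant c > 0 such that t_{n j} ≤ c u_j for all j ≥ 1. Then there exist a positive integer m and a constant C > 0 such that (t_1 t_2 ⋯ t_{m k})^{1/(m k)} ≤ C (u_1 u_2 ⋯ u_k)^{1/k} for all k ≥ 1. -/
open Finset

private lemma anti_aux {f : ℕ → ℝ} (hdec : ∀ j, 1 ≤ j → f (j + 1) ≤ f j) :
    ∀ a b, 1 ≤ a → a ≤ b → f b ≤ f a := by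
  intro a b ha hab
  induction b with
  | zero => omega
  | succ b ih =>
    rcases Nat.lt_or_ge a (b + 1) with h | h
    · exact le_trans (hdec b (by omega)) (ih (by omega))
    · have : a = b + 1 := by omega
      simp [this]

/-- If `diag{t_j}` is in the ideal generated by `diag{u_j}` (sequence-theoretically:
`t_{n j} ≤ c u_j`), then the sequence of geometric means of `t` is in the ideal generated
by the geometric means of `u`. -/
theorem stmt0 (u t : ℕ → ℝ)
    (hu_pos : ∀ j, 1 ≤ j → 0 < u j) (ht_pos : ∀ j, 1 ≤ j → 0 < t j)
    (hu_dec : ∀ j, 1 ≤ j → u (j + 1) ≤ u j) (ht_dec : ∀ j, 1 ≤ j → t (j + 1) ≤ t j)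
    (hu_lim : Filter.Tendsto u Filter.atTop (nhds 0))
    (ht_lim : Filter.Tendsto t Filter.atTop (nhds 0))
    (h : ∃ n : ℕ, 1 ≤ n ∧ ∃ c : ℝ, 0 < c ∧ ∀ j, 1 ≤ j → t (n * j) ≤ c * u j) :
    ∃ m : ℕ, 1 ≤ m ∧ ∃ C : ℝ, 0 < C ∧ ∀ k, 1 ≤ k →
      (∏ j ∈ Finset.Icc 1 (m * k), t j) ^ (((m * k : ℕ) : ℝ))⁻¹ ≤
        C * (∏ j ∈ Finset.Icc 1 k, u j) ^ (((k : ℕ) : ℝ))⁻¹ := by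
  obtain ⟨n, hn, c, hc, hcu⟩ := h
  set m : ℕ := 2 * n with hm
  have hm1 : 1 ≤ m := by omega
  set D : ℝ := max c (t 1 / u 1) with hD
  have hD0 : 0 < D := lt_of_lt_of_le hc (le_max_left _ _)
  refine ⟨m, hm1, D, hD0, ?_⟩
  -- pointwise bound on blocks
  have key : ∀ k j : ℕ, m * k + 1 ≤ j → j ≤ m * (k + 1) → t j ≤ D * u (k + 1) := by
    intro k j hj1 hj2
    rcases Nat.eq_zero_or_pos k with rfl | hk
    · have h1 : t j ≤ t 1 := anti_aux ht_dec 1 j le_rfl (by omega)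
      have h2 : t 1 = (t 1 / u 1) * u 1 :=
        (div_mul_cancel₀ _ (hu_pos 1 le_rfl).ne').symm
      calc t j ≤ t 1 := h1
        _ = (t 1 / u 1) * u 1 := h2
        _ ≤ D * u 1 := by
            apply mul_le_mul_of_nonneg_right (le_max_right _ _) (hu_pos 1 le_rfl).le
    · have hjn : n * (k + 1) ≤ j := by
        have e : 2 * n * k + 1 ≤ j := hj1
        nlinarith [e, hk, hn]
      have h1 : t j ≤ t (n * (k + 1)) :=
        anti_aux ht_dec (n * (k + 1)) j (by nlinarith) hjn
      have h2 : t (n * (k + 1)) ≤ c * u (k + 1) := hcu (k + 1) (by omega)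
      calc t j ≤ c * u (k + 1) := h1.trans h2
        _ ≤ D * u (k + 1) :=
            mul_le_mul_of_nonneg_right (le_max_left _ _) (hu_pos (k + 1) (by omega)).le
  -- product bound by induction
  have prodb : ∀ k : ℕ, ∏ j ∈ Finset.Icc 1 (m * k), t j ≤
      D ^ (m * k) * (∏ i ∈ Finset.Icc 1 k, u i) ^ m := by
    intro k
    induction k with
    | zero => simp
    | succ k ih =>
      have hsplit : ∏ j ∈ Finset.Ioc 0 (m * (k + 1)), t j =
          (∏ j ∈ Finset.Ioc 0 (m * k), t j) * ∏ j ∈ Finset.Ioc (m * k) (m * (k + 1)), t j := by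
        rw [← Finset.prod_Ioc_consecutive t (by omega : 0 ≤ m * k)
          (by nlinarith : m * k ≤ m * (k + 1))]
      have hIcc : ∀ N : ℕ, Finset.Icc 1 N = Finset.Ioc 0 N := fun N => by
        rw [← Finset.Icc_add_one_left_eq_Ioc]; rfl
      have hblock : ∏ j ∈ Finset.Ioc (m * k) (m * (k + 1)), t j ≤ (D * u (k + 1)) ^ m := by
        have hcard : (Finset.Ioc (m * k) (m * (k + 1))).card = m := by
          rw [Nat.card_Ioc]; ring_nf; omega
        calc ∏ j ∈ Finset.Ioc (m * k) (m * (k + 1)), t j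
            ≤ ∏ _j ∈ Finset.Ioc (m * k) (m * (k + 1)), (D * u (k + 1)) := by
              apply Finset.prod_le_prod
              · intro j hj
                simp only [Finset.mem_Ioc] at hj
                exact (ht_pos j (by omega)).le
              · intro j hj
                simp only [Finset.mem_Ioc] at hj
                exact key k j (by omega) hj.2
          _ = (D * u (k + 1)) ^ m := by rw [Finset.prod_const, hcard]
      have hpos : 0 < ∏ j ∈ Finset.Ioc 0 (m * k), t j :=
        Finset.prod_pos (fun j hj => ht_pos j (by simp only [Finset.mem_Ioc] at hj; omega))
      have hDu : (0:ℝ) ≤ D * u (k + 1) := mul_nonneg hD0.le (hu_pos (k+1) (by omega)).le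
      calc ∏ j ∈ Finset.Icc 1 (m * (k + 1)), t j
          = (∏ j ∈ Finset.Ioc 0 (m * k), t j) * ∏ j ∈ Finset.Ioc (m * k) (m * (k + 1)), t j := by
            rw [hIcc, hsplit]
        _ ≤ (D ^ (m * k) * (∏ i ∈ Finset.Icc 1 k, u i) ^ m) * (D * u (k + 1)) ^ m := by
            apply mul_le_mul _ hblock (Finset.prod_nonneg fun j hj =>
              (ht_pos j (by simp only [Finset.mem_Ioc] at hj; omega)).le)
              (mul_nonneg (pow_nonneg hD0.le _) (pow_nonneg (Finset.prod_nonneg fun i hi =>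
                (hu_pos i (by simp only [Finset.mem_Icc] at hi; omega)).le) _))
            rw [← hIcc]; exact ih
        _ = D ^ (m * (k + 1)) * (∏ i ∈ Finset.Icc 1 (k + 1), u i) ^ m := by
            rw [Finset.prod_Icc_succ_top (by omega : 1 ≤ k + 1), mul_pow, mul_pow]
            ring
  -- conclude via rpow
  intro k hk
  have hmk : 0 < m * k := Nat.mul_pos (by omega) hk
  have hP : 0 < ∏ j ∈ Finset.Icc 1 (m * k), t j :=
    Finset.prod_pos (fun j hj => ht_pos j (by simp only [Finset.mem_Icc] at hj; omega))
  have hQ : 0 < ∏ i ∈ Finset.Icc 1 k, u i :=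
    Finset.prod_pos (fun i hi => hu_pos i (by simp only [Finset.mem_Icc] at hi; omega))
  set P := ∏ j ∈ Finset.Icc 1 (m * k), t j
  set Q := ∏ i ∈ Finset.Icc 1 k, u i
  have hPQ : P ≤ D ^ (m * k) * Q ^ m := prodb k
  have he : (0:ℝ) ≤ (((m * k : ℕ) : ℝ))⁻¹ := inv_nonneg.mpr (Nat.cast_nonneg _)
  have step1 : P ^ (((m * k : ℕ) : ℝ))⁻¹ ≤ (D ^ (m * k) * Q ^ m) ^ (((m * k : ℕ) : ℝ))⁻¹ :=
    Real.rpow_le_rpow hP.le hPQ he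
  have hrw : (D ^ (m * k) * Q ^ m : ℝ) ^ (((m * k : ℕ) : ℝ))⁻¹ = D * Q ^ (((k : ℕ) : ℝ))⁻¹ := by
    rw [Real.mul_rpow (by positivity) (by positivity)]
    rw [← Real.rpow_natCast D (m * k), ← Real.rpow_natCast Q m,
      ← Real.rpow_mul hD0.le, ← Real.rpow_mul hQ.le]
    have h1 : ((m * k : ℕ) : ℝ) * (((m * k : ℕ) : ℝ))⁻¹ = 1 := by
      rw [mul_inv_cancel₀]
      exact_mod_cast hmk.ne'
    have h2 : ((m : ℕ) : ℝ) * (((m * k : ℕ) : ℝ))⁻¹ = ((k : ℕ) : ℝ)⁻¹ := by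
      have hm0 : ((m : ℕ) : ℝ) ≠ 0 := by exact_mod_cast (by omega : m ≠ 0)
      have hk0 : ((k : ℕ) : ℝ) ≠ 0 := by exact_mod_cast (by omega : k ≠ 0)
      push_cast
      field_simp
    rw [h1, h2, Real.rpow_one]
  rw [hrw] at step1
  exact step1
end

section
/- Let A, B, Q be bounded operators on a Hilbert space with A and B quasi-nilpotent. Then lim sup_{n→∞} ‖Aⁿ + Σ_{k=0}^{n-1} A^{n-k-1} Q B^k + Bⁿ‖^{1/n} = 0; that is, if Tⁿ admits such an expansion for all n, the spectral radius of T is zero. -/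
open Filter Real Topology

lemma aux_pow_bound {H : Type*} [NormedAddCommGroup H] [InnerProductSpace ℂ H] [CompleteSpace H]
    (T : H →L[ℂ] H) (hT : spectralRadius ℂ T = 0) {δ : ℝ} (hδ : 0 < δ) :
    ∃ C : ℝ, 1 ≤ C ∧ ∀ n, ‖T ^ n‖ ≤ C * δ ^ n := by
  have h := spectrum.pow_norm_pow_one_div_tendsto_nhds_spectralRadius T
  rw [hT] at h
  have h2 : ∀ᶠ n : ℕ in atTop, ENNReal.ofReal (‖T ^ n‖ ^ (1 / n : ℝ)) < ENNReal.ofReal δ := by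
    refine h.eventually_lt_const ?_
    simpa using hδ
  obtain ⟨N, hN⟩ := h2.exists_forall_of_atTop
  have key : ∀ n, N + 1 ≤ n → ‖T ^ n‖ ≤ δ ^ n := by
    intro n hn
    have hn0 : n ≠ 0 := by omega
    have := hN n (by omega)
    rw [ENNReal.ofReal_lt_ofReal_iff hδ] at this
    have h3 : (‖T ^ n‖ ^ (1 / n : ℝ)) ^ (n : ℕ) ≤ δ ^ (n : ℕ) :=
      pow_le_pow_left₀ (Real.rpow_nonneg (norm_nonneg _) _) this.le n
    rwa [← Real.rpow_natCast (‖T ^ n‖ ^ (1 / n : ℝ)) n, ← Real.rpow_mul (norm_nonneg _),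
      one_div, inv_mul_cancel₀ (by exact_mod_cast hn0), Real.rpow_one] at h3
  refine ⟨1 + ∑ k ∈ Finset.range (N + 1), ‖T ^ k‖ * δ⁻¹ ^ k, ?_, ?_⟩
  · have : 0 ≤ ∑ k ∈ Finset.range (N + 1), ‖T ^ k‖ * δ⁻¹ ^ k :=
      Finset.sum_nonneg fun k _ => mul_nonneg (norm_nonneg _) (by positivity)
    linarith
  · intro n
    rcases le_or_gt (N + 1) n with hn | hn
    · calc ‖T ^ n‖ ≤ δ ^ n := key n hn
        _ ≤ (1 + ∑ k ∈ Finset.range (N + 1), ‖T ^ k‖ * δ⁻¹ ^ k) * δ ^ n := by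
          nlinarith [Finset.sum_nonneg (fun k (_ : k ∈ Finset.range (N+1)) =>
            mul_nonneg (norm_nonneg (T ^ k)) (pow_nonneg (inv_nonneg.2 hδ.le) k)),
            pow_pos hδ n]
    · have hmem : n ∈ Finset.range (N + 1) := Finset.mem_range.2 hn
      have h4 : ‖T ^ n‖ * δ⁻¹ ^ n ≤ ∑ k ∈ Finset.range (N + 1), ‖T ^ k‖ * δ⁻¹ ^ k :=
        Finset.single_le_sum (fun k _ => mul_nonneg (norm_nonneg _) (by positivity)) hmem
      have hd : (0:ℝ) < δ ^ n := pow_pos hδ n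
      have : ‖T ^ n‖ = (‖T ^ n‖ * δ⁻¹ ^ n) * δ ^ n := by
        rw [inv_pow, mul_assoc, inv_mul_cancel₀ hd.ne', mul_one]
      rw [this]
      nlinarith

/-- If `A` and `B` are quasi-nilpotent bounded operators and `Q` is bounded, then
`limsup_n ‖Aⁿ + Σ_{k=0}^{n-1} A^{n-k-1} Q B^k + Bⁿ‖^{1/n} = 0`. -/
theorem stmt8 {H : Type*} [NormedAddCommGroup H] [InnerProductSpace ℂ H] [CompleteSpace H]
    (A B Q : H →L[ℂ] H)
    (hA : spectralRadius ℂ A = 0) (hB : spectralRadius ℂ B = 0) :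
    Filter.limsup
      (fun n : ℕ =>
        ‖A ^ n + (∑ k ∈ Finset.range n, A ^ (n - k - 1) * Q * B ^ k) + B ^ n‖ ^ ((n : ℝ))⁻¹)
      Filter.atTop = 0 := by
  set f : ℕ → ℝ := fun n =>
    ‖A ^ n + (∑ k ∈ Finset.range n, A ^ (n - k - 1) * Q * B ^ k) + B ^ n‖ ^ ((n : ℝ))⁻¹ with hf
  have hf_nonneg : ∀ n, 0 ≤ f n := fun n => Real.rpow_nonneg (norm_nonneg _) _
  have htend : Tendsto f atTop (𝓝 0) := by
    rw [tendsto_order]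
    constructor
    · intro a ha
      exact Eventually.of_forall fun n => lt_of_lt_of_le ha (hf_nonneg n)
    · intro ε hε
      -- choose δ and η
      set δ : ℝ := min (ε / 4) 4⁻¹ with hδdef
      have hδ : 0 < δ := lt_min (by linarith) (by norm_num)
      set η : ℝ := 2 * δ with hηdef
      have hη : 0 < η := by positivity
      have hηε : η < ε := by
        have : δ ≤ ε / 4 := min_le_left _ _
        simp only [hηdef]; linarith
      obtain ⟨Ca, hCa1, hCa⟩ := aux_pow_bound A hA hδ
      obtain ⟨Cb, hCb1, hCb⟩ := aux_pow_bound B hB hδ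
      set K : ℝ := Ca + Cb + Ca * Cb * ‖Q‖ * δ⁻¹ with hKdef
      have hK : 0 < K := by
        have : 0 ≤ Ca * Cb * ‖Q‖ * δ⁻¹ := by positivity
        simp only [hKdef]; linarith
      have hbound : ∀ n : ℕ, 1 ≤ n →
          ‖A ^ n + (∑ k ∈ Finset.range n, A ^ (n - k - 1) * Q * B ^ k) + B ^ n‖ ≤ K * η ^ n := by
        intro n hn
        have hS : ‖∑ k ∈ Finset.range n, A ^ (n - k - 1) * Q * B ^ k‖ ≤
            n * (Ca * Cb * ‖Q‖ * δ ^ (n - 1)) := by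
          calc ‖∑ k ∈ Finset.range n, A ^ (n - k - 1) * Q * B ^ k‖
              ≤ ∑ k ∈ Finset.range n, ‖A ^ (n - k - 1) * Q * B ^ k‖ := norm_sum_le _ _
            _ ≤ ∑ k ∈ Finset.range n, Ca * Cb * ‖Q‖ * δ ^ (n - 1) := by
                refine Finset.sum_le_sum fun k hk => ?_
                have hk' : k < n := Finset.mem_range.1 hk
                have h1 : ‖A ^ (n - k - 1) * Q * B ^ k‖ ≤ ‖A ^ (n - k - 1)‖ * ‖Q‖ * ‖B ^ k‖ :=
                  le_trans (norm_mul_le _ _) (by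
                    gcongr; exact norm_mul_le _ _)
                have h2 : ‖A ^ (n - k - 1)‖ * ‖Q‖ * ‖B ^ k‖ ≤
                    (Ca * δ ^ (n - k - 1)) * ‖Q‖ * (Cb * δ ^ k) :=
                  mul_le_mul
                    (mul_le_mul (hCa _) le_rfl (norm_nonneg Q) (by positivity))
                    (hCb k) (norm_nonneg _) (by positivity)
                have h3 : (Ca * δ ^ (n - k - 1)) * ‖Q‖ * (Cb * δ ^ k) =
                    Ca * Cb * ‖Q‖ * δ ^ (n - 1) := by
                  rw [show n - 1 = (n - k - 1) + k by omega, pow_add]; ring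
                linarith
            _ = n * (Ca * Cb * ‖Q‖ * δ ^ (n - 1)) := by
                rw [Finset.sum_const, Finset.card_range, nsmul_eq_mul]
        have hnorm : ‖A ^ n + (∑ k ∈ Finset.range n, A ^ (n - k - 1) * Q * B ^ k) + B ^ n‖ ≤
            Ca * δ ^ n + n * (Ca * Cb * ‖Q‖ * δ ^ (n - 1)) + Cb * δ ^ n :=
          le_trans (norm_add₃_le) (by
            have := hCa n; have := hCb n; linarith)
        -- now bound by K * η ^ n
        have hδη : δ ^ n ≤ η ^ n := pow_le_pow_left₀ hδ.le (by simp only [hηdef]; linarith) n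
        have hnδ : (n : ℝ) * δ ^ n ≤ η ^ n := by
          have h2n : (n : ℝ) ≤ 2 ^ n := by
            exact_mod_cast (@Nat.lt_two_pow_self n).le
          have : η ^ n = 2 ^ n * δ ^ n := by rw [hηdef, mul_pow]
          rw [this]
          have := pow_pos hδ n
          nlinarith
        have hnδ' : (n : ℝ) * δ ^ (n - 1) ≤ δ⁻¹ * η ^ n := by
          have hδn : δ ^ n = δ * δ ^ (n - 1) := by
            rw [← pow_succ']; congr 1; omega
          have : (n : ℝ) * δ ^ (n - 1) = δ⁻¹ * ((n : ℝ) * δ ^ n) := by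
            rw [hδn]; field_simp
          rw [this]
          exact mul_le_mul_of_nonneg_left hnδ (by positivity)
        have hQ : (0:ℝ) ≤ ‖Q‖ := norm_nonneg Q
        calc ‖A ^ n + (∑ k ∈ Finset.range n, A ^ (n - k - 1) * Q * B ^ k) + B ^ n‖
            ≤ Ca * δ ^ n + n * (Ca * Cb * ‖Q‖ * δ ^ (n - 1)) + Cb * δ ^ n := hnorm
          _ ≤ Ca * η ^ n + Ca * Cb * ‖Q‖ * (δ⁻¹ * η ^ n) + Cb * η ^ n := by
              have h1 : Ca * δ ^ n ≤ Ca * η ^ n :=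
                mul_le_mul_of_nonneg_left hδη (by linarith)
              have h2 : Cb * δ ^ n ≤ Cb * η ^ n :=
                mul_le_mul_of_nonneg_left hδη (by linarith)
              have h3 : (n:ℝ) * (Ca * Cb * ‖Q‖ * δ ^ (n - 1)) ≤
                  Ca * Cb * ‖Q‖ * (δ⁻¹ * η ^ n) := by
                have : (n:ℝ) * (Ca * Cb * ‖Q‖ * δ ^ (n - 1)) =
                    Ca * Cb * ‖Q‖ * ((n:ℝ) * δ ^ (n - 1)) := by ring
                rw [this]
                exact mul_le_mul_of_nonneg_left hnδ' (by positivity)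
              linarith
          _ = K * η ^ n := by simp only [hKdef]; ring
      -- rpow bound and limit
      have hgle : ∀ᶠ n : ℕ in atTop, f n ≤ K ^ ((n : ℝ))⁻¹ * η := by
        filter_upwards [eventually_ge_atTop 1] with n hn
        have hn0 : n ≠ 0 := by omega
        calc f n ≤ (K * η ^ n) ^ ((n : ℝ))⁻¹ :=
              Real.rpow_le_rpow (norm_nonneg _) (hbound n hn) (by positivity)
          _ = K ^ ((n : ℝ))⁻¹ * (η ^ n) ^ ((n : ℝ))⁻¹ :=
              Real.mul_rpow hK.le (by positivity)
          _ = K ^ ((n : ℝ))⁻¹ * η := by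
              rw [Real.pow_rpow_inv_natCast hη.le hn0]
      have hKlim : Tendsto (fun n : ℕ => K ^ ((n : ℝ))⁻¹ * η) atTop (𝓝 η) := by
        have h1 : Tendsto (fun n : ℕ => K ^ ((n : ℝ))⁻¹) atTop (𝓝 1) := by
          have := (Real.continuousAt_const_rpow (a := K) (b := 0) hK.ne').tendsto.comp
            tendsto_inv_atTop_nhds_zero_nat
          simpa [Real.rpow_zero, Function.comp_def] using this
        simpa using h1.mul_const η
      have hev : ∀ᶠ n : ℕ in atTop, K ^ ((n : ℝ))⁻¹ * η < ε := hKlim.eventually_lt_const hηε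
      filter_upwards [hgle, hev] with n h1 h2
      exact lt_of_le_of_lt h1 h2
  exact htend.limsup_eq
end

section
/- Let U₁, U₂ be the isometries on ℓ²(ℕ) defined by U₁ e_n = e_{2n+1} and U₂ e_n = e_{2n}, and let B be an upper triangular bounded operator with diagonal entries b_{nn} = ξ_n. Then A := ½([U₁*, U₁B] + [U₂*, U₂B]) is upper triangular with diagonal entries a₁₁ = ξ₁ and, for 2^{k-1} ≤ n ≤ 2^k − 1 with k ≥ 2, a_{nn} = ξ_{2^{k-1}} − ½ ξ_{2^{k-2}}. -/
set_option maxHeartbeats 1000000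

lemma pnat_tri (n : ℕ+) : n = 1 ∨ (∃ p : ℕ+, n = 2 * p) ∨ (∃ p : ℕ+, n = 2 * p + 1) := by
  rcases Nat.even_or_odd (n : ℕ) with ⟨p, hp⟩ | ⟨p, hp⟩
  · have h2 : 0 < p + p := hp ▸ n.2
    have hp1 : 0 < p := by omega
    refine Or.inr (Or.inl ⟨⟨p, hp1⟩, ?_⟩)
    apply PNat.coe_injective
    rw [hp]
    exact (by omega : p + p = 2 * p)
  · by_cases h1 : p = 0
    · exact Or.inl (by apply PNat.coe_injective; rw [hp, h1]; rfl)
    · refine Or.inr (Or.inr ⟨⟨p, Nat.pos_of_ne_zero h1⟩, ?_⟩)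
      apply PNat.coe_injective
      rw [hp]
      simp only [PNat.mul_coe, PNat.add_coe, PNat.one_coe, PNat.mk_coe, PNat.val_ofNat]
      rfl

lemma pnat_two_mul_coe (p : ℕ+) : ((2 * p : ℕ+) : ℕ) = 2 * (p : ℕ) := by
  simp [PNat.mul_coe, PNat.val_ofNat]

lemma pnat_two_mul_add_one_coe (p : ℕ+) : ((2 * p + 1 : ℕ+) : ℕ) = 2 * (p : ℕ) + 1 := by
  simp [PNat.mul_coe, PNat.add_coe, PNat.val_ofNat]

open ContinuousLinearMap in
/-- With `U₁ e_n = e_{2n+1}`, `U₂ e_n = e_{2n}` isometries on `ℓ²(ℕ)` (basis indexed by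
`ℕ+`) and `B` upper triangular with diagonal `(ξ_n)` constant on dyadic blocks,
`A = ½([U₁*, U₁B] + [U₂*, U₂B])` is upper triangular with diagonal `a₁₁ = ξ₁` and
`a_{nn} = ξ_{2^{k-1}} − ½ ξ_{2^{k-2}}` for `2^{k-1} ≤ n ≤ 2^k − 1`, `k ≥ 2`. -/
theorem stmt15 (e : ℕ+ → lp (fun _ : ℕ+ => ℂ) 2) (he : ∀ n, e n = lp.single 2 n 1)
    (U₁ U₂ B : lp (fun _ : ℕ+ => ℂ) 2 →L[ℂ] lp (fun _ : ℕ+ => ℂ) 2)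
    (hU₁iso : Isometry U₁) (hU₂iso : Isometry U₂)
    (hU₁ : ∀ n : ℕ+, U₁ (e n) = e (2 * n + 1))
    (hU₂ : ∀ n : ℕ+, U₂ (e n) = e (2 * n))
    (ξ : ℕ+ → ℂ)
    (hBtri : ∀ m n : ℕ+, n < m → (inner ℂ (e m) (B (e n)) : ℂ) = 0)
    (hBdiag : ∀ n : ℕ+, (inner ℂ (e n) (B (e n)) : ℂ) = ξ n)
    (hξblocks : ∀ k : ℕ, 1 ≤ k → ∀ n : ℕ+,
      (2 : ℕ+) ^ (k - 1) ≤ n → n < (2 : ℕ+) ^ k → ξ n = ξ ((2 : ℕ+) ^ (k - 1)))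
    (A : lp (fun _ : ℕ+ => ℂ) 2 →L[ℂ] lp (fun _ : ℕ+ => ℂ) 2)
    (hA : A = (1/2 : ℂ) •
      ((adjoint U₁ * (U₁ * B) - (U₁ * B) * adjoint U₁) +
       (adjoint U₂ * (U₂ * B) - (U₂ * B) * adjoint U₂))) :
    (∀ m n : ℕ+, n < m → (inner ℂ (e m) (A (e n)) : ℂ) = 0) ∧
    (inner ℂ (e 1) (A (e 1)) : ℂ) = ξ 1 ∧
    (∀ k : ℕ, 2 ≤ k → ∀ n : ℕ+,
      (2 : ℕ+) ^ (k - 1) ≤ n → n < (2 : ℕ+) ^ k →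
        (inner ℂ (e n) (A (e n)) : ℂ) = ξ ((2 : ℕ+) ^ (k - 1)) - (1/2 : ℂ) * ξ ((2 : ℕ+) ^ (k - 2))) := by
  -- inner products of basis vectors
  have hinner : ∀ m n : ℕ+, (inner ℂ (e m) (e n) : ℂ) = if m = n then 1 else 0 := by
    intro m n
    rw [he, he, lp.inner_single_left, lp.single_apply]
    split_ifs with h
    · subst h; simp
    · simp [Ne.symm h]
  -- coordinates via inner products
  have coord : ∀ (x : lp (fun _ : ℕ+ => ℂ) 2) (q : ℕ+), (inner ℂ (e q) x : ℂ) = x q := by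
    intro x q
    rw [he, lp.inner_single_left]
    simp
  have hext : ∀ x y : lp (fun _ : ℕ+ => ℂ) 2,
      (∀ q : ℕ+, (inner ℂ (e q) x : ℂ) = inner ℂ (e q) y) → x = y := by
    intro x y h
    apply lp.ext
    funext q
    rw [← coord x q, ← coord y q, h q]
  -- U₁†U₁ = 1 etc.
  have hn1 : ∀ x, ‖U₁ x‖ = ‖x‖ := hU₁iso.norm_map_of_map_zero (map_zero U₁)
  have hn2 : ∀ x, ‖U₂ x‖ = ‖x‖ := hU₂iso.norm_map_of_map_zero (map_zero U₂)
  have hc1 : adjoint U₁ ∘L U₁ = 1 := (U₁.norm_map_iff_adjoint_comp_self).mp hn1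
  have hc2 : adjoint U₂ ∘L U₂ = 1 := (U₂.norm_map_iff_adjoint_comp_self).mp hn2
  have h1 : ∀ x, adjoint U₁ (U₁ x) = x := by
    intro x
    have := congrArg (fun T : lp (fun _ : ℕ+ => ℂ) 2 →L[ℂ] lp (fun _ : ℕ+ => ℂ) 2 => T x) hc1
    simpa using this
  have h2 : ∀ x, adjoint U₂ (U₂ x) = x := by
    intro x
    have := congrArg (fun T : lp (fun _ : ℕ+ => ℂ) 2 →L[ℂ] lp (fun _ : ℕ+ => ℂ) 2 => T x) hc2
    simpa using this
  -- adjoints on basis vectors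
  have cadj1 : ∀ (m q : ℕ+), (inner ℂ (e q) (adjoint U₁ (e m)) : ℂ) =
      if 2 * q + 1 = m then 1 else 0 := by
    intro m q
    rw [adjoint_inner_right, hU₁, hinner]
  have cadj2 : ∀ (m q : ℕ+), (inner ℂ (e q) (adjoint U₂ (e m)) : ℂ) =
      if 2 * q = m then 1 else 0 := by
    intro m q
    rw [adjoint_inner_right, hU₂, hinner]
  have adj1 : ∀ p : ℕ+, adjoint U₁ (e (2 * p + 1)) = e p := by
    intro p
    apply hext
    intro q
    rw [cadj1, hinner]
    congr 1
    apply propext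
    constructor
    · intro h
      have := congrArg (fun x : ℕ+ => (x : ℕ)) h
      simp only [pnat_two_mul_add_one_coe] at this
      exact PNat.coe_injective (by omega)
    · intro h; rw [h]
  have adj1e : ∀ p : ℕ+, adjoint U₁ (e (2 * p)) = 0 := by
    intro p
    apply hext
    intro q
    rw [cadj1, inner_zero_right]
    rw [if_neg]
    intro h
    have := congrArg (fun x : ℕ+ => (x : ℕ)) h
    simp only [pnat_two_mul_add_one_coe, pnat_two_mul_coe] at this
    omega
  have adj1o : adjoint U₁ (e 1) = 0 := by
    apply hext
    intro q
    rw [cadj1, inner_zero_right]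
    rw [if_neg]
    intro h
    have := congrArg (fun x : ℕ+ => (x : ℕ)) h
    have hq : 0 < (q : ℕ) := q.2
    simp only [pnat_two_mul_add_one_coe, PNat.one_coe, PNat.val_ofNat] at this
    omega
  have adj2 : ∀ p : ℕ+, adjoint U₂ (e (2 * p)) = e p := by
    intro p
    apply hext
    intro q
    rw [cadj2, hinner]
    congr 1
    apply propext
    constructor
    · intro h
      have := congrArg (fun x : ℕ+ => (x : ℕ)) h
      simp only [pnat_two_mul_coe] at this
      exact PNat.coe_injective (by omega)
    · intro h; rw [h]
  have adj2o : ∀ p : ℕ+, adjoint U₂ (e (2 * p + 1)) = 0 := by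
    intro p
    apply hext
    intro q
    rw [cadj2, inner_zero_right]
    rw [if_neg]
    intro h
    have := congrArg (fun x : ℕ+ => (x : ℕ)) h
    simp only [pnat_two_mul_add_one_coe, pnat_two_mul_coe] at this
    omega
  have adj2one : adjoint U₂ (e 1) = 0 := by
    apply hext
    intro q
    rw [cadj2, inner_zero_right]
    rw [if_neg]
    intro h
    have := congrArg (fun x : ℕ+ => (x : ℕ)) h
    have hq : 0 < (q : ℕ) := q.2
    simp only [pnat_two_mul_coe, PNat.one_coe, PNat.val_ofNat] at this
    omega
  -- key formula
  have key : ∀ m n : ℕ+, (inner ℂ (e m) (A (e n)) : ℂ) =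
      (inner ℂ (e m) (B (e n)) : ℂ)
      - (1/2 : ℂ) * inner ℂ (adjoint U₁ (e m)) (B (adjoint U₁ (e n)))
      - (1/2 : ℂ) * inner ℂ (adjoint U₂ (e m)) (B (adjoint U₂ (e n))) := by
    intro m n
    rw [hA]
    simp only [smul_apply, ContinuousLinearMap.mul_def, ContinuousLinearMap.comp_apply, sub_apply, add_apply, inner_smul_right,
      inner_add_right, inner_sub_right]
    rw [h1, h2, ← adjoint_inner_left U₁, ← adjoint_inner_left U₂]
    ring
  refine ⟨?_, ?_, ?_⟩
  · -- upper triangular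
    intro m n hlt
    rw [key, hBtri m n hlt]
    have t1 : (inner ℂ (adjoint U₁ (e m)) (B (adjoint U₁ (e n))) : ℂ) = 0 := by
      rcases pnat_tri n with hn | ⟨p, hn⟩ | ⟨p, hn⟩
      · rw [hn, adj1o]; simp
      · rw [hn, adj1e p]; simp
      · rcases pnat_tri m with hm | ⟨r, hm⟩ | ⟨r, hm⟩
        · rw [hm, adj1o]; simp
        · rw [hm, adj1e r]; simp
        · rw [hm, hn, adj1, adj1]
          apply hBtri
          rw [hm, hn] at hlt
          have := (PNat.coe_lt_coe _ _).mpr hlt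
          simp only [pnat_two_mul_add_one_coe] at this
          exact (PNat.coe_lt_coe _ _).mp (by omega)
    have t2 : (inner ℂ (adjoint U₂ (e m)) (B (adjoint U₂ (e n))) : ℂ) = 0 := by
      rcases pnat_tri n with hn | ⟨p, hn⟩ | ⟨p, hn⟩
      · rw [hn, adj2one]; simp
      · rcases pnat_tri m with hm | ⟨r, hm⟩ | ⟨r, hm⟩
        · rw [hm, adj2one]; simp
        · rw [hm, hn, adj2, adj2]
          apply hBtri
          rw [hm, hn] at hlt
          have := (PNat.coe_lt_coe _ _).mpr hlt
          simp only [pnat_two_mul_coe] at this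
          exact (PNat.coe_lt_coe _ _).mp (by omega)
        · rw [hm, adj2o r]; simp
      · rw [hn, adj2o p]; simp
    rw [t1, t2]
    ring
  · -- a₁₁
    rw [key, hBdiag, adj1o, adj2one]
    simp
  · -- diagonal blocks
    intro k hk n hn1 hn2
    have hk1 : 1 ≤ k := by omega
    have hkk : (k - 1) - 1 = k - 2 := by omega
    have hM : ((2 : ℕ+) ^ (k - 2) : ℕ+).val = 2 ^ (k - 2) := by
      simp [PNat.pow_coe, PNat.val_ofNat]
    have hM1 : ((2 : ℕ+) ^ (k - 1) : ℕ+).val = 2 ^ (k - 1) := by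
      simp [PNat.pow_coe, PNat.val_ofNat]
    have hMk : ((2 : ℕ+) ^ k : ℕ+).val = 2 ^ k := by
      simp [PNat.pow_coe, PNat.val_ofNat]
    have hpow : (2 : ℕ) ^ (k - 1) = 2 * 2 ^ (k - 2) := by
      rw [← pow_succ']
      congr 1
      omega
    have hpowk : (2 : ℕ) ^ k = 2 * 2 ^ (k - 1) := by
      rw [← pow_succ']
      congr 1
      omega
    have hn1' : (2 : ℕ) ^ (k - 1) ≤ (n : ℕ) := by
      have := (PNat.coe_le_coe _ _).mpr hn1
      rwa [hM1] at this
    have hn2' : (n : ℕ) < (2 : ℕ) ^ k := by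
      have := (PNat.coe_lt_coe _ _).mpr hn2
      rwa [hMk] at this
    have hξn : ξ n = ξ ((2 : ℕ+) ^ (k - 1)) := hξblocks k hk1 n hn1 hn2
    rcases pnat_tri n with hne | ⟨p, hne⟩ | ⟨p, hne⟩
    · exfalso
      rw [hne] at hn1'
      simp only [PNat.one_coe] at hn1'
      have : (2:ℕ) ≤ 2 ^ (k-1) := by
        calc (2:ℕ) = 2^1 := by norm_num
        _ ≤ 2^(k-1) := Nat.pow_le_pow_right (by norm_num) (by omega)
      omega
    all_goals {
      have hpc : (2 : ℕ) ^ (k - 2) ≤ (p : ℕ) ∧ (p : ℕ) < 2 ^ (k - 1) := by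
        rw [hne] at hn1' hn2'
        first
        | (simp only [pnat_two_mul_coe] at hn1' hn2'; omega)
        | (simp only [pnat_two_mul_add_one_coe] at hn1' hn2'; omega)
      have hp1 : (2 : ℕ+) ^ (k - 2) ≤ p := by
        apply (PNat.coe_le_coe _ _).mp
        rw [hM]
        exact hpc.1
      have hp2 : p < (2 : ℕ+) ^ (k - 1) := by
        apply (PNat.coe_lt_coe _ _).mp
        rw [hM1]
        exact hpc.2
      have hξp : ξ p = ξ ((2 : ℕ+) ^ (k - 2)) := by
        have := hξblocks (k - 1) (by omega) p (by rwa [hkk]) hp2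
        rwa [hkk] at this
      rw [key, hBdiag, hξn]
      first
      | (rw [hne, adj1e, adj2]
         simp only [inner_zero_left, inner_zero_right]
         rw [hBdiag, hξp]
         ring)
      | (rw [hne, adj1, adj2o]
         simp only [inner_zero_left, inner_zero_right]
         rw [hBdiag, hξp]
         ring)
    }
end

section
/- Let (w_k) be a complex sequence with |w_k| ≤ u_k for all k, where (u_k) is positive and nonincreasing, and let (λ_k) be a rearrangement of (w_k) with |λ₁| ≥ |λ₂| ≥ ⋯. Then for every k ≥ 1, |Σ_{j=1}^k λ_j − Σ_{j=1}^k w_j| ≤ 2 k u_k. -/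
/-- If `|w_k| ≤ u_k` with `u` positive nonincreasing, and `(λ_k)` is a rearrangement of
`(w_k)` with nonincreasing absolute values, then partial sums differ by at most `2 k u_k`. -/
theorem stmt17 (u : ℕ+ → ℝ) (hu_pos : ∀ k, 0 < u k) (hu_dec : Antitone u)
    (w : ℕ+ → ℂ) (hw : ∀ k, ‖w k‖ ≤ u k)
    (π : ℕ+ ≃ ℕ+) (lam : ℕ+ → ℂ) (hlam : ∀ k, lam k = w (π k))
    (hlam_dec : Antitone fun k => ‖lam k‖) :
    ∀ k : ℕ+,
      ‖(∑ j ∈ Finset.Icc 1 k, lam j) - ∑ j ∈ Finset.Icc 1 k, w j‖ ≤ 2 * (k : ℝ) * u k := by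
  intro k
  set A : Finset ℕ+ := Finset.Icc 1 k with hA
  have hAcard : A.card = k := by
    rw [hA, PNat.card_Icc]
    simp
  -- key: ‖lam k‖ ≤ u k
  have hkey : ‖lam k‖ ≤ u k := by
    by_contra h
    push_neg at h
    have hall : ∀ j ∈ A, π j < k := by
      intro j hj
      by_contra hge
      push_neg at hge
      have h1 : ‖lam k‖ ≤ ‖lam j‖ := hlam_dec (Finset.mem_Icc.mp hj).2
      have h2 : ‖lam j‖ ≤ u (π j) := by rw [hlam]; exact hw _
      have h3 : u (π j) ≤ u k := hu_dec hge
      linarith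
    have hsub : A.image π ⊆ Finset.Ico 1 k := by
      intro i hi
      simp only [Finset.mem_image] at hi
      obtain ⟨j, hj, rfl⟩ := hi
      exact Finset.mem_Ico.mpr ⟨(π j).one_le, hall j hj⟩
    have hle := Finset.card_le_card hsub
    rw [Finset.card_image_of_injective _ π.injective, hAcard, PNat.card_Ico] at hle
    have := k.pos
    rw [PNat.one_coe] at hle
    omega
  set S : Finset ℕ+ := A.image π with hS
  have hScard : S.card = k := by
    rw [hS, Finset.card_image_of_injective _ π.injective, hAcard]
  have hsum : (∑ j ∈ A, lam j) = ∑ i ∈ S, w i := by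
    rw [hS, Finset.sum_image (fun a _ b _ h => π.injective h)]
    exact Finset.sum_congr rfl fun j _ => hlam j
  have hdiff : (∑ j ∈ A, lam j) - ∑ j ∈ A, w j
      = (∑ i ∈ S \ A, w i) - ∑ i ∈ A \ S, w i := by
    rw [hsum, ← Finset.sum_inter_add_sum_sdiff S A w, ← Finset.sum_inter_add_sum_sdiff A S w,
      Finset.inter_comm]
    ring
  rw [hdiff]
  have b1 : ‖∑ i ∈ S \ A, w i‖ ≤ (k : ℝ) * u k := by
    calc ‖∑ i ∈ S \ A, w i‖ ≤ ∑ i ∈ S \ A, ‖w i‖ := norm_sum_le _ _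
      _ ≤ ∑ _i ∈ S \ A, u k := by
          refine Finset.sum_le_sum fun i hi => ?_
          have hiA : i ∉ A := (Finset.mem_sdiff.mp hi).2
          have hik : k < i := by
            rw [hA, Finset.mem_Icc] at hiA
            push_neg at hiA
            exact hiA i.one_le
          exact (hw i).trans (hu_dec hik.le)
      _ = ((S \ A).card : ℝ) * u k := by rw [Finset.sum_const, nsmul_eq_mul]
      _ ≤ (k : ℝ) * u k := by
          have hc : (S \ A).card ≤ k := hScard ▸ Finset.card_le_card (Finset.sdiff_subset)
          exact mul_le_mul_of_nonneg_right (by exact_mod_cast hc) (hu_pos k).le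
  have b2 : ‖∑ i ∈ A \ S, w i‖ ≤ (k : ℝ) * u k := by
    calc ‖∑ i ∈ A \ S, w i‖ ≤ ∑ i ∈ A \ S, ‖w i‖ := norm_sum_le _ _
      _ ≤ ∑ _i ∈ A \ S, u k := by
          refine Finset.sum_le_sum fun i hi => ?_
          have hiS : i ∉ S := (Finset.mem_sdiff.mp hi).2
          set m := π.symm i with hm
          have hmi : π m = i := π.apply_symm_apply i
          have hmA : m ∉ A := fun hmem => hiS (hmi ▸ Finset.mem_image_of_mem π hmem)
          have hkm : k ≤ m := by
            rw [hA, Finset.mem_Icc] at hmA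
            push_neg at hmA
            exact (hmA m.one_le).le
          have : ‖w i‖ = ‖lam m‖ := by rw [hlam, hmi]
          rw [this]
          exact (hlam_dec hkm).trans hkey
      _ = ((A \ S).card : ℝ) * u k := by rw [Finset.sum_const, nsmul_eq_mul]
      _ ≤ (k : ℝ) * u k := by
          have hc : (A \ S).card ≤ k := hAcard ▸ Finset.card_le_card (Finset.sdiff_subset)
          exact mul_le_mul_of_nonneg_right (by exact_mod_cast hc) (hu_pos k).le
  calc ‖(∑ i ∈ S \ A, w i) - ∑ i ∈ A \ S, w i‖
      ≤ ‖∑ i ∈ S \ A, w i‖ + ‖∑ i ∈ A \ S, w i‖ := norm_sub_le _ _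
    _ ≤ (k : ℝ) * u k + (k : ℝ) * u k := add_le_add b1 b2
    _ = 2 * (k : ℝ) * u k := by ring
end
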